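/- arXiv:2108.02895 — 2 statements merged into one kernel-verified Lean document; each statement's English description precedes it below -/
import Mathlib

section
/- If f : X → X' is a homotopy equivalence which restricts to homotopy equivalences Y_j → Y_j' (j = 1, 2) between subspaces Y_j ⊆ X and Y_j' ⊆ X', then TC_X(Y₁ × Y₂) = TC_{X'}(Y₁' × Y₂'). -/
open Set

/-- The relative topological complexity `TC_X(A)` for `A ⊆ X × X`. -/
noncomputable def relTC (X : Type*) [TopologicalSpace X] (A : Set (X × X)) : ℕ∞ :=
  sInf {N : ℕ∞ | ∃ k : ℕ, N = k ∧ ∃ U : Fin k → Set A,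
    (∀ i, IsOpen (U i)) ∧ (⋃ i, U i) = univ ∧
    ∀ i, ∃ s : C(U i, C(unitInterval, X)),
      ∀ p : U i, s p 0 = (p.1.1 : X × X).1 ∧ s p 1 = (p.1.1 : X × X).2}

/-- A continuous map is a homotopy equivalence if it has a homotopy inverse. -/
def IsHomotopyEquivalence {A B : Type*} [TopologicalSpace A] [TopologicalSpace B]
    (f : C(A, B)) : Prop :=
  ∃ g : C(B, A), (g.comp f).Homotopic (ContinuousMap.id A) ∧
    (f.comp g).Homotopic (ContinuousMap.id B)

/-- The restriction of `f` to a map of subspaces `Y → Y'`. -/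
def restrictMap {X X' : Type*} [TopologicalSpace X] [TopologicalSpace X']
    (f : C(X, X')) {Y : Set X} {Y' : Set X'} (h : Set.MapsTo f Y Y') : C(Y, Y') :=
  ⟨h.restrict f Y Y', f.continuous.restrict h⟩

/-!
Given maps `u_j : Y_j' → Y_j` and `ψ : X → X'` with `ψ ∘ u_j` homotopic to the inclusion
`Y_j' ↪ X'`, a motion planner over `U ⊆ Y₁ × Y₂` pulls back along `u₁ × u₂`: push the planned
path forward by `ψ` and join its endpoints to the original ones along the two homotopies. This
gives `TC_{X'}(Y₁' × Y₂') ≤ TC_X(Y₁ × Y₂)`. Taking `u_j` homotopy inverses of `f|_{Y_j}` and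
`ψ = f` gives one inequality; taking `u_j = f|_{Y_j}` and `ψ` a homotopy inverse of `f` gives
the other.
-/

open ContinuousMap

section MotionPlanner

variable {X X' : Type*} [TopologicalSpace X] [TopologicalSpace X']

def HasMotionPlanner {A : Set (X × X)} (U : Set A) : Prop :=
  ∃ γ : ∀ p : U, Path (p.1.1 : X × X).1 (p.1.1 : X × X).2, Continuous ↿γ

theorem hasMotionPlanner_iff {A : Set (X × X)} (U : Set A) :
    HasMotionPlanner U ↔ ∃ s : C(U, C(unitInterval, X)),
      ∀ p : U, s p 0 = (p.1.1 : X × X).1 ∧ s p 1 = (p.1.1 : X × X).2 := by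
  constructor
  · rintro ⟨γ, hγ⟩
    exact ⟨⟨fun p => (γ p).toContinuousMap, continuous_of_continuous_uncurry _ hγ⟩,
      fun p => ⟨(γ p).source, (γ p).target⟩⟩
  · rintro ⟨s, hs⟩
    exact ⟨fun p => ⟨s p, (hs p).1, (hs p).2⟩,
      continuous_uncurry_of_continuous s⟩

theorem relTC_le_of_forall_hasMotionPlanner_preimage {A : Set (X × X)} {A' : Set (X' × X')}
    (Φ : C(A', A)) (hΦ : ∀ U : Set A, HasMotionPlanner U → HasMotionPlanner (Φ ⁻¹' U)) :
    relTC X' A' ≤ relTC X A := by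
  apply sInf_le_sInf
  rintro _ ⟨k, rfl, U, hUo, hUc, hUs⟩
  refine ⟨k, rfl, fun i => Φ ⁻¹' U i, fun i => (hUo i).preimage Φ.continuous, ?_, fun i => ?_⟩
  · rw [← Set.preimage_iUnion, hUc, Set.preimage_univ]
  · exact (hasMotionPlanner_iff _).1 (hΦ _ ((hasMotionPlanner_iff _).2 (hUs i)))

theorem HasMotionPlanner.preimage {A : Set (X × X)} {A' : Set (X' × X')}
    (Φ : C(A', A)) (ψ : C(X, X'))
    (h₁ : ((ψ.comp (fst.restrict A)).comp Φ).Homotopic (fst.restrict A'))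
    (h₂ : ((ψ.comp (snd.restrict A)).comp Φ).Homotopic (snd.restrict A'))
    {U : Set A} (hU : HasMotionPlanner U) : HasMotionPlanner (Φ ⁻¹' U) := by
  obtain ⟨H₁⟩ := h₁
  obtain ⟨H₂⟩ := h₂
  obtain ⟨γ, hγ⟩ := hU
  have hH₁ : Continuous ↿fun q : Φ ⁻¹' U => H₁.evalAt q :=
    H₁.continuous.comp (continuous_snd.prodMk (continuous_subtype_val.comp continuous_fst))
  have hH₂ : Continuous ↿fun q : Φ ⁻¹' U => H₂.evalAt q :=
    H₂.continuous.comp (continuous_snd.prodMk (continuous_subtype_val.comp continuous_fst))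
  have hψγ : Continuous ↿fun q : Φ ⁻¹' U => (γ (Φ.restrictPreimage U q)).map ψ.continuous :=
    ψ.continuous.comp (hγ.comp ((Φ.restrictPreimage U).continuous.prodMap continuous_id))
  refine ⟨fun q => ((H₁.evalAt q).symm.trans ((γ (Φ.restrictPreimage U q)).map ψ.continuous)).trans
    (H₂.evalAt q), ?_⟩
  exact Path.trans_continuous_family _
    (Path.trans_continuous_family _ (Path.symm_continuous_family _ hH₁) _ hψγ) _ hH₂

end MotionPlanner

section Subspaces

variable {X X' : Type*} [TopologicalSpace X] [TopologicalSpace X']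

theorem relTC_prod_le_of_homotopic {Y₁ Y₂ : Set X} {Y₁' Y₂' : Set X'}
    (u₁ : C(Y₁', Y₁)) (u₂ : C(Y₂', Y₂)) (ψ : C(X, X'))
    (h₁ : ((ψ.restrict Y₁).comp u₁).Homotopic ((ContinuousMap.id X').restrict Y₁'))
    (h₂ : ((ψ.restrict Y₂).comp u₂).Homotopic ((ContinuousMap.id X').restrict Y₂')) :
    relTC X' (Y₁' ×ˢ Y₂') ≤ relTC X (Y₁ ×ˢ Y₂) := by
  let e' : C(↥(Y₁' ×ˢ Y₂'), Y₁' × Y₂') := Homeomorph.Set.prod Y₁' Y₂'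
  let Φ : C(↥(Y₁' ×ˢ Y₂'), ↥(Y₁ ×ˢ Y₂)) :=
    ((Homeomorph.Set.prod Y₁ Y₂).symm : C(Y₁ × Y₂, ↥(Y₁ ×ˢ Y₂))).comp ((u₁.prodMap u₂).comp e')
  exact relTC_le_of_forall_hasMotionPlanner_preimage Φ fun _ =>
    HasMotionPlanner.preimage Φ ψ (h₁.comp (.refl (fst.comp e'))) (h₂.comp (.refl (snd.comp e')))

theorem homotopic_restrict_comp_restrictMap {Y : Set X} {Y' : Set X'} {f : C(X, X')}
    (hm : Set.MapsTo f Y Y') {g : C(X', X)} (hgf : (g.comp f).Homotopic (.id X)) :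
    ((g.restrict Y').comp (restrictMap f hm)).Homotopic ((ContinuousMap.id X).restrict Y) :=
  hgf.comp (.refl ((ContinuousMap.id X).restrict Y))

theorem homotopic_restrict_comp_of_restrictMap_comp {Y : Set X} {Y' : Set X'} {f : C(X, X')}
    (hm : Set.MapsTo f Y Y') {g : C(Y', Y)} (hfg : ((restrictMap f hm).comp g).Homotopic (.id Y')) :
    ((f.restrict Y).comp g).Homotopic ((ContinuousMap.id X').restrict Y') :=
  (Homotopic.refl ((ContinuousMap.id X').restrict Y')).comp hfg

end Subspaces

/-- If `f : X → X'` is a homotopy equivalence restricting to homotopy equivalences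
`Y_j → Y_j'` (`j = 1, 2`), then `TC_X(Y₁ × Y₂) = TC_{X'}(Y₁' × Y₂')`. -/
theorem stmt8 (X X' : Type*) [TopologicalSpace X] [TopologicalSpace X']
    (Y₁ Y₂ : Set X) (Y₁' Y₂' : Set X') (f : C(X, X'))
    (hm₁ : Set.MapsTo f Y₁ Y₁') (hm₂ : Set.MapsTo f Y₂ Y₂')
    (hf : IsHomotopyEquivalence f)
    (hf₁ : IsHomotopyEquivalence (restrictMap f hm₁))
    (hf₂ : IsHomotopyEquivalence (restrictMap f hm₂)) :
    relTC X (Y₁ ×ˢ Y₂) = relTC X' (Y₁' ×ˢ Y₂') := by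
  obtain ⟨g, hgf, -⟩ := hf
  obtain ⟨g₁, -, hfg₁⟩ := hf₁
  obtain ⟨g₂, -, hfg₂⟩ := hf₂
  apply le_antisymm
  · exact relTC_prod_le_of_homotopic (restrictMap f hm₁) (restrictMap f hm₂) g
      (homotopic_restrict_comp_restrictMap hm₁ hgf) (homotopic_restrict_comp_restrictMap hm₂ hgf)
  · exact relTC_prod_le_of_homotopic g₁ g₂ f
      (homotopic_restrict_comp_of_restrictMap_comp hm₁ hfg₁)
      (homotopic_restrict_comp_of_restrictMap_comp hm₂ hfg₂)
end

section
/- Let Y be a space with at least n points, Z a discrete space with n points z₁, …, z_n, and Y' = Y ∗ Z the join. Then the inclusion Cⁿ(Y) ↪ Cⁿ(Y') of ordered configuration spaces is nullhomotopic, and consequently TC_{Cⁿ(Y')}(Cⁿ(Y) × Cⁿ(Y)) = 1. -/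
open Set

/-- The ordered configuration space of `n` distinct points in `W`, as a subset of `Wⁿ`. -/
def Conf (n : ℕ) (W : Type*) : Set (Fin n → W) :=
  {w | Function.Injective w}

/-- The identifications defining the join `Y ∗ Z`. -/
def JoinRel (Y Z : Type*) :
    (Y × Z × unitInterval) → (Y × Z × unitInterval) → Prop := fun a b =>
  (a.2.2 = 0 ∧ b.2.2 = 0 ∧ a.1 = b.1) ∨ (a.2.2 = 1 ∧ b.2.2 = 1 ∧ a.2.1 = b.2.1)

/-- The join `Y ∗ Z`, a quotient of `Y × Z × [0,1]`. -/
def Join (Y Z : Type*) [TopologicalSpace Y] [TopologicalSpace Z] :=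
  Quot (JoinRel Y Z)

instance (Y Z : Type*) [TopologicalSpace Y] [TopologicalSpace Z] :
    TopologicalSpace (Join Y Z) :=
  instTopologicalSpaceQuot

/-!
The homotopy `H_t(c) = ([y₁,z₁,t], …, [y_n,z_n,t])` slides a configuration of the bottom copy of
`Y` up to the configuration of cone points `([·,z₁,1], …, [·,z_n,1])`, which does not depend on
`c`; the points stay distinct because for `t ≠ 0` the labels `zᵢ` already separate them. Running
`H` forward from `a` and backward to `b` is then one continuous motion planner on all of
`Cⁿ(Y) × Cⁿ(Y)`, which is nonempty because `Y` has `n` distinct points.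
-/

open Topology

namespace JoinRel

variable {Y Z : Type*}

theorem symm {a b : Y × Z × unitInterval} : JoinRel Y Z a b → JoinRel Y Z b a := by
  rintro (⟨ha, hb, h⟩ | ⟨ha, hb, h⟩)
  exacts [.inl ⟨hb, ha, h.symm⟩, .inr ⟨hb, ha, h.symm⟩]

theorem trans {a b c : Y × Z × unitInterval} :
    JoinRel Y Z a b → JoinRel Y Z b c → JoinRel Y Z a c := by
  rintro (⟨ha, hb, hab⟩ | ⟨ha, hb, hab⟩) (⟨hb', hc, hbc⟩ | ⟨hb', hc, hbc⟩)
  · exact .inl ⟨ha, hc, hab.trans hbc⟩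
  · exact absurd (hb.symm.trans hb') zero_ne_one
  · exact absurd (hb'.symm.trans hb) zero_ne_one
  · exact .inr ⟨ha, hc, hab.trans hbc⟩

theorem equivalence_eq_or :
    Equivalence fun a b : Y × Z × unitInterval => a = b ∨ JoinRel Y Z a b where
  refl _ := .inl rfl
  symm := by
    rintro _ _ (rfl | h)
    exacts [.inl rfl, .inr h.symm]
  trans := by
    rintro _ _ _ (rfl | hab) (rfl | hbc)
    exacts [.inl rfl, .inr hbc, .inr hab, .inr (hab.trans hbc)]

end JoinRel

namespace Join

variable {Y Z : Type*}

theorem mk_eq_mk_iff {a b : Y × Z × unitInterval} :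
    Quot.mk (JoinRel Y Z) a = Quot.mk (JoinRel Y Z) b ↔ a = b ∨ JoinRel Y Z a b := by
  rw [Quot.eq]
  refine ⟨fun h => JoinRel.equivalence_eq_or.eqvGen_iff.1
    (Relation.EqvGen.mono (fun _ _ => .inr) _ _ h), ?_⟩
  rintro (rfl | h)
  exacts [.refl _, .rel _ _ h]

theorem mk_one_eq_mk_one (y y' : Y) (z : Z) :
    Quot.mk (JoinRel Y Z) (y, z, 1) = Quot.mk (JoinRel Y Z) (y', z, 1) :=
  Quot.sound (.inr ⟨rfl, rfl, rfl⟩)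

theorem eq_of_mk_eq_mk_of_ne_zero {y y' : Y} {z z' : Z} {t t' : unitInterval} (ht : t ≠ 0)
    (h : Quot.mk (JoinRel Y Z) (y, z, t) = Quot.mk (JoinRel Y Z) (y', z', t')) : z = z' := by
  rcases mk_eq_mk_iff.1 h with h | ⟨h, -⟩ | ⟨-, -, h⟩
  exacts [congrArg (·.2.1) h, absurd h ht, h]

theorem eq_of_mk_zero_eq_mk_zero {y y' : Y} {z z' : Z}
    (h : Quot.mk (JoinRel Y Z) (y, z, 0) = Quot.mk (JoinRel Y Z) (y', z', 0)) : y = y' := by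
  rcases mk_eq_mk_iff.1 h with h | ⟨-, -, h⟩ | ⟨h, -, -⟩
  exacts [congrArg (·.1) h, h, absurd h zero_ne_one]

theorem preimage_mk_image_mk_of_ne_one (U : Set Y) :
    Quot.mk (JoinRel Y Z) ⁻¹' (Quot.mk (JoinRel Y Z) '' {p | p.1 ∈ U ∧ p.2.2 ≠ 1}) =
      {p | p.1 ∈ U ∧ p.2.2 ≠ 1} := by
  refine Subset.antisymm ?_ (subset_preimage_image _ _)
  rintro p ⟨q, ⟨hqU, hq1⟩, hqp⟩
  rcases mk_eq_mk_iff.1 hqp with rfl | ⟨-, hp0, hqp⟩ | ⟨hq1', -, -⟩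
  · exact ⟨hqU, hq1⟩
  · exact ⟨hqp ▸ hqU, hp0 ▸ zero_ne_one⟩
  · exact absurd hq1' hq1

variable [TopologicalSpace Y] [TopologicalSpace Z]

/-- The image of an open `U ⊆ Y` is cut out by the open set of points `[y, z, t]` with `y ∈ U`
and `t ≠ 1`, which is saturated for the identifications of the join. -/
theorem isInducing_mk_zero (z₀ : Z) :
    IsInducing fun y : Y => Quot.mk (JoinRel Y Z) (y, z₀, 0) := by
  have hcont : Continuous fun y : Y => Quot.mk (JoinRel Y Z) (y, z₀, 0) := by fun_prop
  refine ⟨le_antisymm (continuous_iff_le_induced.1 hcont) ?_⟩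
  intro U hU
  refine isOpen_induced_iff.2
    ⟨Quot.mk _ '' {p | p.1 ∈ U ∧ p.2.2 ≠ 1}, isQuotientMap_quot_mk.isOpen_preimage.1 ?_, ?_⟩
  · rw [preimage_mk_image_mk_of_ne_one]
    exact (hU.preimage continuous_fst).inter (isOpen_ne.preimage continuous_snd.snd)
  · ext y
    rw [mem_preimage, ← mem_preimage (f := Quot.mk _), preimage_mk_image_mk_of_ne_one]
    simp

end Join

section RelTC

variable {X : Type*} [TopologicalSpace X]

theorem relTC_le_one {A : Set (X × X)} (s : C(A, C(unitInterval, X)))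
    (hs : ∀ p : A, s p 0 = p.1.1 ∧ s p 1 = p.1.2) : relTC X A ≤ 1 :=
  sInf_le ⟨1, by norm_num, fun _ => univ, fun _ => isOpen_univ, iUnion_const _,
    fun _ => ⟨s.comp ⟨Subtype.val, continuous_subtype_val⟩, fun p => hs p⟩⟩

theorem one_le_relTC {A : Set (X × X)} (hA : A.Nonempty) : 1 ≤ relTC X A := by
  refine le_sInf ?_
  rintro _ ⟨k, rfl, U, -, hU, -⟩
  obtain ⟨a, ha⟩ := hA
  have : (⟨a, ha⟩ : A) ∈ ⋃ i, U i := hU ▸ mem_univ _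
  obtain ⟨i, -⟩ := mem_iUnion.1 this
  exact_mod_cast Nat.one_le_iff_ne_zero.2 (Fin.pos i).ne'

/-- A nullhomotopy `H` of `S ↪ X` to `x` gives the global motion planner `a ⇝ x ⇝ b`. -/
theorem relTC_prod_le_one_of_nullhomotopic {S : Set X}
    (h : (⟨Subtype.val, continuous_subtype_val⟩ : C(S, X)).Nullhomotopic) :
    relTC X (S ×ˢ S) ≤ 1 := by
  obtain ⟨x, ⟨H⟩⟩ := h
  let γ : ∀ s : S, Path (s : X) x := fun s =>
    ⟨⟨fun t => H (t, s), by fun_prop⟩, H.apply_zero s, H.apply_one s⟩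
  have hγ : Continuous ↿γ := H.continuous.comp continuous_swap
  let δ : ∀ p : ↥(S ×ˢ S), Path p.1.1 p.1.2 := fun p =>
    (γ ⟨p.1.1, p.2.1⟩).trans (γ ⟨p.1.2, p.2.2⟩).symm
  have hγ₁ : Continuous ↿fun p : ↥(S ×ˢ S) => γ ⟨p.1.1, p.2.1⟩ :=
    hγ.comp (f := fun q : ↥(S ×ˢ S) × unitInterval => ((⟨q.1.1.1, q.1.2.1⟩ : S), q.2))
      (by fun_prop)
  have hγ₂ : Continuous ↿fun p : ↥(S ×ˢ S) => γ ⟨p.1.2, p.2.2⟩ :=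
    hγ.comp (f := fun q : ↥(S ×ˢ S) × unitInterval => ((⟨q.1.1.2, q.1.2.2⟩ : S), q.2))
      (by fun_prop)
  have hδ : Continuous ↿δ := Path.trans_continuous_family _ hγ₁ _
    (Path.symm_continuous_family _ hγ₂)
  exact relTC_le_one (ContinuousMap.curry ⟨↿δ, hδ⟩) fun p => ⟨(δ p).source, (δ p).target⟩

theorem relTC_prod_eq_one_of_nullhomotopic {S : Set X} (hS : S.Nonempty)
    (h : (⟨Subtype.val, continuous_subtype_val⟩ : C(S, X)).Nullhomotopic) :
    relTC X (S ×ˢ S) = 1 :=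
  (relTC_prod_le_one_of_nullhomotopic h).antisymm (one_le_relTC (hS.prod hS))

end RelTC

section BottomConf

variable {n : ℕ} {Y Z : Type*} [TopologicalSpace Y] [TopologicalSpace Z] (z : Fin n → Z)

/-- `Cⁿ(Y)` inside `Cⁿ(Y ∗ Z)`, as the configurations `([y₁,z₁,0], …, [y_n,z_n,0])`. -/
def bottomConf : Set (Conf n (Join Y Z)) :=
  {c | ∀ i, ∃ y : Y, (c : Fin n → Join Y Z) i = Quot.mk (JoinRel Y Z) (y, z i, 0)}

namespace bottomConf

noncomputable def coord (c : bottomConf (Y := Y) z) (i : Fin n) : Y := (c.2 i).choose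

theorem mk_coord (c : bottomConf (Y := Y) z) (i : Fin n) :
    Quot.mk (JoinRel Y Z) (coord z c i, z i, 0) = (c : Fin n → Join Y Z) i :=
  (c.2 i).choose_spec.symm

theorem continuous_coord (i : Fin n) : Continuous fun c : bottomConf (Y := Y) z => coord z c i :=
  (Join.isInducing_mk_zero (z i)).continuous_iff.2 <| by
    simp only [Function.comp_def, mk_coord]
    exact (continuous_apply i).comp (continuous_subtype_val.comp continuous_subtype_val)

variable {z}

/-- For `t ≠ 0` the points `[yᵢ, zᵢ, t]` are told apart by their `Z`-coordinates. -/
theorem injective_mk_coord (hz : Function.Injective z) (t : unitInterval)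
    (c : bottomConf (Y := Y) z) :
    Function.Injective fun i => Quot.mk (JoinRel Y Z) (coord z c i, z i, t) := by
  intro i j h
  by_cases ht : t = 0
  · subst ht
    simp only [mk_coord] at h
    exact c.1.2 h
  · exact hz (Join.eq_of_mk_eq_mk_of_ne_zero ht h)

noncomputable def contraction (hz : Function.Injective z) :
    C(unitInterval × bottomConf (Y := Y) z, Conf n (Join Y Z)) where
  toFun p := ⟨fun i => Quot.mk _ (coord z p.2 i, z i, p.1), injective_mk_coord hz p.1 p.2⟩
  continuous_toFun := by
    refine Continuous.subtype_mk (continuous_pi fun i => continuous_quot_mk.comp ?_) _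
    exact ((continuous_coord z i).comp continuous_snd).prodMk (by fun_prop)

theorem contraction_zero (hz : Function.Injective z) (c : bottomConf (Y := Y) z) :
    contraction hz (0, c) = c :=
  Subtype.ext (funext (mk_coord z c))

theorem contraction_one (hz : Function.Injective z) (c c' : bottomConf (Y := Y) z) :
    contraction hz (1, c) = contraction hz (1, c') :=
  Subtype.ext (funext fun i => Join.mk_one_eq_mk_one _ _ (z i))

theorem nullhomotopic_val (hz : Function.Injective z) (c₀ : bottomConf (Y := Y) z) :
    (⟨Subtype.val, continuous_subtype_val⟩ :
      C(bottomConf (Y := Y) z, Conf n (Join Y Z))).Nullhomotopic :=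
  ⟨contraction hz (1, c₀),
    ⟨{ toContinuousMap := contraction hz
       map_zero_left := contraction_zero hz
       map_one_left c := contraction_one hz c c₀ }⟩⟩

theorem nonempty {f : Fin n → Y} (hf : Function.Injective f) :
    (bottomConf (Y := Y) z).Nonempty :=
  ⟨⟨fun i => Quot.mk _ (f i, z i, 0), fun _ _ h => hf (Join.eq_of_mk_zero_eq_mk_zero h)⟩,
    fun i => ⟨f i, rfl⟩⟩

end bottomConf

end BottomConf

theorem stmt12_general (n : ℕ) (Y Z : Type*) [TopologicalSpace Y]
    [TopologicalSpace Z] (z : Fin n ≃ Z)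
    (hY : ∃ f : Fin n → Y, Function.Injective f)
    (S : Set ↥(Conf n (Join Y Z)))
    (hS : S = {c | ∀ i, ∃ y : Y,
      (c : Fin n → Join Y Z) i = Quot.mk (JoinRel Y Z) (y, z i, 0)}) :
    ContinuousMap.Nullhomotopic
      (⟨Subtype.val, continuous_subtype_val⟩ : C(S, ↥(Conf n (Join Y Z)))) ∧
    relTC ↥(Conf n (Join Y Z)) (S ×ˢ S) = 1 := by
  -- `hS` is elaborated as an equation between images in `Fin n → Join Y Z`.
  have hS' : S = bottomConf z := by
    rw [← preimage_image_eq S Subtype.val_injective, hS]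
    rfl
  subst hS'
  obtain ⟨f, hf⟩ := hY
  have hne := bottomConf.nonempty (z := z) hf
  have hnull := bottomConf.nullhomotopic_val z.injective ⟨_, hne.some_mem⟩
  exact ⟨hnull, relTC_prod_eq_one_of_nullhomotopic hne hnull⟩

/-- Let `Y` have at least `n` points, `Z` a discrete space with `n` points
`z₁, …, z_n`, and `Y' = Y ∗ Z`. Identifying `Cⁿ(Y)` with the subspace of
`Cⁿ(Y')` of configurations of the form `([y₁,z₁,0], …, [y_n,z_n,0])`, the
inclusion `Cⁿ(Y) ↪ Cⁿ(Y')` is nullhomotopic, and consequently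
`TC_{Cⁿ(Y')}(Cⁿ(Y) × Cⁿ(Y)) = 1`. -/
theorem stmt12 (n : ℕ) (Y Z : Type*) [TopologicalSpace Y]
    [TopologicalSpace Z] [DiscreteTopology Z] (z : Fin n ≃ Z)
    (hY : ∃ f : Fin n → Y, Function.Injective f)
    (S : Set ↥(Conf n (Join Y Z)))
    (hS : S = {c | ∀ i, ∃ y : Y,
      (c : Fin n → Join Y Z) i = Quot.mk (JoinRel Y Z) (y, z i, 0)}) :
    ContinuousMap.Nullhomotopic
      (⟨Subtype.val, continuous_subtype_val⟩ : C(S, ↥(Conf n (Join Y Z)))) ∧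
    relTC ↥(Conf n (Join Y Z)) (S ×ˢ S) = 1 :=
  stmt12_general n Y Z z hY S hS
end
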